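/- If A is a nonsingular n×n matrix, y, z ∈ {±1}ⁿ, and the matrix A⁻¹ D_y Δ D_z has a positive real eigenvalue λ > 0, then the interval matrix [A − (1/λ)Δ, A + (1/λ)Δ] contains the singular matrix A − (1/λ) D_y Δ D_z; in particular d(A, Δ) ≤ 1/λ. -/

import Mathlib

open Matrix
open scoped ENNReal NNReal

noncomputable def regRad {n : ℕ} (A Δ : Matrix (Fin n) (Fin n) ℝ) : ℝ≥0∞ :=
  ⨅ δ ∈ {δ : ℝ≥0 | ∃ M : Matrix (Fin n) (Fin n) ℝ,
      (∀ i j, |M i j - A i j| ≤ (δ : ℝ) * Δ i j) ∧ M.det = 0},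
    (δ : ℝ≥0∞)

namespace Matrix

variable {ι : Type*} [Fintype ι] [DecidableEq ι]

theorem det_eq_zero_of_mem_spectrum {K : Type*} [Field K] {N : Matrix ι ι K} {μ : K}
    (h : μ ∈ spectrum K N) : (algebraMap K _ μ - N).det = 0 := by
  rwa [spectrum.mem_iff, isUnit_iff_isUnit_det, isUnit_iff_ne_zero, not_not] at h

/-- Factor `A - μ⁻¹ • B = μ⁻¹ • A * (μ - A⁻¹ * B)`. -/
theorem det_sub_inv_smul_eq_zero_of_mem_spectrum_inv_mul {K : Type*} [Field K]
    {A B : Matrix ι ι K} (hA : A.det ≠ 0) {μ : K} (hμ : μ ≠ 0)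
    (h : μ ∈ spectrum K (A⁻¹ * B)) : (A - μ⁻¹ • B).det = 0 := by
  have hfactor : A - μ⁻¹ • B = μ⁻¹ • (A * (algebraMap K _ μ - A⁻¹ * B)) := by
    rw [Matrix.mul_sub, ← Matrix.mul_assoc, mul_nonsing_inv A hA.isUnit, Matrix.one_mul,
      Algebra.algebraMap_eq_smul_one, Matrix.mul_smul, Matrix.mul_one, smul_sub, smul_smul,
      inv_mul_cancel₀ hμ, one_smul]
  rw [hfactor, det_smul, det_mul, det_eq_zero_of_mem_spectrum h, mul_zero, mul_zero]

theorem abs_diagonal_mul_mul_diagonal_apply {R : Type*} [Ring R] [LinearOrder R]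
    [IsStrictOrderedRing R] {y z : ι → R} (hy : ∀ i, |y i| = 1) (hz : ∀ i, |z i| = 1)
    (Δ : Matrix ι ι R) (i j : ι) : |(diagonal y * Δ * diagonal z) i j| = |Δ i j| := by
  rw [mul_diagonal, diagonal_mul, abs_mul, abs_mul, hy, hz, one_mul, mul_one]

end Matrix

theorem regRad_le_ofReal {n : ℕ} {A Δ M : Matrix (Fin n) (Fin n) ℝ} {δ : ℝ} (hδ : 0 ≤ δ)
    (hM : ∀ i j, |M i j - A i j| ≤ δ * Δ i j) (hdet : M.det = 0) :
    regRad A Δ ≤ ENNReal.ofReal δ := by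
  rw [ENNReal.ofReal_eq_coe_nnreal hδ]
  exact biInf_le _ ⟨M, hM, hdet⟩

theorem regRad_le_inv_eigenvalue {n : ℕ} (A Δ : Matrix (Fin n) (Fin n) ℝ)
    (hA : A.det ≠ 0) (hΔ : ∀ i j, 0 ≤ Δ i j)
    (y z : Fin n → ℝ) (hy : ∀ i, y i = 1 ∨ y i = -1) (hz : ∀ i, z i = 1 ∨ z i = -1)
    (lam : ℝ) (hlam : 0 < lam)
    (heig : lam ∈ spectrum ℝ (A⁻¹ * (Matrix.diagonal y * Δ * Matrix.diagonal z))) :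
    ((A - (1 / lam) • (Matrix.diagonal y * Δ * Matrix.diagonal z)).det = 0 ∧
      (∀ i j, |(A - (1 / lam) • (Matrix.diagonal y * Δ * Matrix.diagonal z)) i j - A i j|
        ≤ (1 / lam) * Δ i j)) ∧
    regRad A Δ ≤ ENNReal.ofReal (1 / lam) := by
  set B := diagonal y * Δ * diagonal z
  have hdet : (A - (1 / lam) • B).det = 0 := by
    rw [one_div]
    exact det_sub_inv_smul_eq_zero_of_mem_spectrum_inv_mul hA hlam.ne' heig
  have hbound : ∀ i j, |(A - (1 / lam) • B) i j - A i j| ≤ (1 / lam) * Δ i j := by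
    intro i j
    have hB : |B i j| = Δ i j := by
      rw [abs_diagonal_mul_mul_diagonal_apply (fun i => (abs_eq zero_le_one).mpr (hy i))
        (fun j => (abs_eq zero_le_one).mpr (hz j)), abs_of_nonneg (hΔ i j)]
    rw [Matrix.sub_apply, Matrix.smul_apply, smul_eq_mul, sub_sub_cancel_left, abs_neg, abs_mul, hB,
      abs_of_pos (one_div_pos.mpr hlam)]
  exact ⟨⟨hdet, hbound⟩, regRad_le_ofReal (one_div_pos.mpr hlam).le hbound hdet⟩
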